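/- If G is a subgraph of Q_n with average degree at least d, where d is a positive integer, then G contains at least |V(G)| increasing geodesics of length d. -/

import Mathlib

open SimpleGraph Finset
open scoped symmDiff

/-- The hypercube `Q_n` on vertex set `{0,1}^n`: two vertices are adjacent iff they
differ in exactly one coordinate. -/
def Q (n : ℕ) : SimpleGraph (Fin n → Bool) where
  Adj x y := hammingDist x y = 1
  symm := ⟨fun x y h => (hammingDist_comm y x).trans h⟩
  loopless := ⟨fun x h => by simp at h⟩

/-- The coordinate direction of a step from `x` to `y` (for an edge of `Q n`, the unique
coordinate where they differ), as a natural number. -/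
def dir {n : ℕ} (x y : Fin n → Bool) : ℕ :=
  (Finset.univ.filter fun i => x i ≠ y i).sup fun i => (i : ℕ)

/-- The list of coordinate directions of the edges of a walk in `Q n`. -/
def dirs {n : ℕ} {u v : Fin n → Bool} (p : (Q n).Walk u v) : List ℕ :=
  p.darts.map fun d => dir d.fst d.snd

/-- A geodesic in `Q n`: a path no two of whose edges lie in the same coordinate
direction. -/
def IsGeodesic {n : ℕ} {u v : Fin n → Bool} (p : (Q n).Walk u v) : Prop :=
  p.IsPath ∧ (dirs p).Nodup

/-- An increasing geodesic in `Q n`: a path whose successive edge directions strictly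
increase. -/
def IsIncGeodesic {n : ℕ} {u v : Fin n → Bool} (p : (Q n).Walk u v) : Prop :=
  p.IsPath ∧ (dirs p).Chain' (· < ·)

/-- `maxInc G x` is the maximum length of an increasing geodesic contained in the
subgraph `G` of `Q n` and ending at the vertex `x`. -/
noncomputable def maxInc {n : ℕ} (G : (Q n).Subgraph) (x : Fin n → Bool) : ℕ :=
  sSup {l | ∃ u, ∃ p : (Q n).Walk u x, p.toSubgraph ≤ G ∧ IsIncGeodesic p ∧ p.length = l}

/-!
Let `F i u` be the length of the longest increasing walk in `G` that ends at `u` and uses only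
directions `< i`, capped at `d - 1`. The edges of `G` in direction `i` form a matching, and
crossing such an edge `u → v` in either orientation gives `F (i + 1) v ≥ min (F i u + 1) (d - 1)`.
Summing over the matching, `∑ u, F i u` increases from `i` to `i + 1` by at least the number of
directed edges in direction `i`, minus the number of those `u → v` with `F i u = d - 1`. Since
`∑ u, F n u ≤ |V(G)| (d - 1)` while there are `2 |E(G)| ≥ d |V(G)|` directed edges, at least
`|V(G)|` directed edges `u → v` have `F (dir u v) u = d - 1`, and appending `u → v` to a walk
witnessing this gives an increasing geodesic of length `d` whose last edge is `u → v`.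
-/

/-- `hswap` and `hsnd` say that `D` is the set of directed edges of a matching. -/
theorem sum_add_card_le_of_matching {α : Type*} [DecidableEq α] {V : Finset α}
    {D : Finset (α × α)} {F F' : α → ℕ} {c : α × α → ℕ}
    (hswap : ∀ p ∈ D, p.swap ∈ D) (hsnd : Set.InjOn Prod.snd (D : Set (α × α)))
    (hV : ∀ p ∈ D, p.2 ∈ V)
    (hmono : ∀ v ∈ V, F v ≤ F' v) (hstep : ∀ p ∈ D, F p.1 + 1 ≤ F' p.2 + c p) :
    ∑ v ∈ V, F v + #D ≤ ∑ v ∈ V, F' v + ∑ p ∈ D, c p := by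
  set I := D.image Prod.snd
  have hI : I ⊆ V := fun v hv => by
    obtain ⟨p, hp, rfl⟩ := mem_image.1 hv
    exact hV p hp
  have hsumI (g : α → ℕ) : ∑ v ∈ I, g v = ∑ p ∈ D, g p.2 := sum_image hsnd
  have hfst : ∑ p ∈ D, F p.1 = ∑ p ∈ D, F p.2 :=
    sum_nbij' Prod.swap Prod.swap hswap hswap (by simp) (by simp) (by simp)
  have hpair : ∑ p ∈ D, F p.1 + #D ≤ ∑ p ∈ D, F' p.2 + ∑ p ∈ D, c p := by
    simpa [sum_add_distrib] using sum_le_sum hstep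
  have hout : ∑ v ∈ V \ I, F v ≤ ∑ v ∈ V \ I, F' v :=
    sum_le_sum fun v hv => hmono v (mem_sdiff.1 hv).1
  rw [← sum_sdiff hI, ← sum_sdiff hI (f := F'), hsumI, hsumI]
  omega

section Hypercube

variable {n : ℕ}

lemma exists_coord_of_adj {x y : Fin n → Bool} (h : (Q n).Adj x y) :
    ∃ k : Fin n, (k : ℕ) = dir x y ∧ x k ≠ y k ∧ ∀ j, j ≠ k → x j = y j := by
  obtain ⟨k, hk⟩ := card_eq_one.mp (show #{i | x i ≠ y i} = 1 from h)
  have hmem : ∀ j, x j ≠ y j ↔ j = k := fun j => by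
    simpa using congrArg (j ∈ ·) hk
  exact ⟨k, by simp [dir, hk], (hmem k).2 rfl, fun j hj => not_not.1 (mt (hmem j).1 hj)⟩

lemma dir_comm (x y : Fin n → Bool) : dir x y = dir y x := by
  simp only [dir, ne_comm]

lemma dir_lt_of_adj {x y : Fin n → Bool} (h : (Q n).Adj x y) : dir x y < n := by
  obtain ⟨k, hk, -⟩ := exists_coord_of_adj h
  exact hk ▸ k.isLt

lemma eq_of_adj_of_dir_eq {x y y' : Fin n → Bool} (h : (Q n).Adj x y) (h' : (Q n).Adj x y')
    (hd : dir x y = dir x y') : y = y' := by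
  obtain ⟨k, hk, hne, hco⟩ := exists_coord_of_adj h
  obtain ⟨k', hk', hne', hco'⟩ := exists_coord_of_adj h'
  obtain rfl : k = k' := Fin.val_injective (by rw [hk, hk', hd])
  funext j
  by_cases hj : j = k
  · subst hj
    revert hne hne'
    cases x j <;> cases y j <;> cases y' j <;> simp
  · rw [← hco j hj, ← hco' j hj]

@[simp] lemma dirs_cons {u w v : Fin n → Bool} (h : (Q n).Adj u w) (q : (Q n).Walk w v) :
    dirs (Walk.cons h q) = dir u w :: dirs q := by
  simp [dirs]

@[simp] lemma dirs_concat {u v w : Fin n → Bool} (p : (Q n).Walk u v) (h : (Q n).Adj v w) :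
    dirs (p.concat h) = dirs p ++ [dir v w] := by
  simp [dirs, Walk.darts_concat]

lemma dirs_drop {u v : Fin n → Bool} (p : (Q n).Walk u v) (k : ℕ) :
    dirs (p.drop k) = (dirs p).drop k := by
  simp [dirs, Walk.darts_drop, List.map_drop]

lemma apply_eq_of_mem_support {w v : Fin n → Bool} (q : (Q n).Walk w v) {k : Fin n}
    (hk : (k : ℕ) ∉ dirs q) {y : Fin n → Bool} (hy : y ∈ q.support) : y k = w k := by
  induction q with
  | nil => simp_all
  | @cons a b v h q ih =>
    rcases List.mem_cons.mp (Walk.support_cons h q ▸ hy) with rfl | hy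
    · rfl
    · rw [dirs_cons, List.mem_cons, not_or] at hk
      obtain ⟨k₀, hk₀, -, hco⟩ := exists_coord_of_adj h
      rw [ih hk.2 hy, hco k fun e => hk.1 (by rw [e, hk₀])]

/-- Moving along an edge changes only the coordinate of its direction, so a walk whose edges
have distinct directions never returns to a vertex. -/
lemma isPath_of_nodup_dirs {u v : Fin n → Bool} (p : (Q n).Walk u v) (h : (dirs p).Nodup) :
    p.IsPath := by
  induction p with
  | nil => exact Walk.IsPath.nil
  | @cons a b v hadj q ih =>
    rw [dirs_cons, List.nodup_cons] at h
    refine (ih h.2).cons fun ha => ?_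
    obtain ⟨k, hk, hne, -⟩ := exists_coord_of_adj hadj
    exact hne (apply_eq_of_mem_support q (hk ▸ h.1) ha)

lemma isIncGeodesic_of_chain {u v : Fin n → Bool} (p : (Q n).Walk u v)
    (h : (dirs p).IsChain (· < ·)) : IsIncGeodesic p :=
  ⟨isPath_of_nodup_dirs p (List.isChain_iff_pairwise.mp h).nodup, h⟩

end Hypercube

section IncreasingWalks

variable {n : ℕ} (G : (Q n).Subgraph)

def IsIncWalkBelow (i : ℕ) {w u : Fin n → Bool} (p : (Q n).Walk w u) : Prop :=
  p.toSubgraph ≤ G ∧ (dirs p).IsChain (· < ·) ∧ ∀ j ∈ dirs p, j < i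

def HasIncWalkBelow (i : ℕ) (u : Fin n → Bool) (l : ℕ) : Prop :=
  ∃ w, ∃ p : (Q n).Walk w u, IsIncWalkBelow G i p ∧ p.length = l

variable {G}

lemma IsIncWalkBelow.concat {i : ℕ} {w u v : Fin n → Bool} {p : (Q n).Walk w u}
    (hp : IsIncWalkBelow G i p) (h : G.Adj u v) (hi : dir u v = i) :
    IsIncWalkBelow G (i + 1) (p.concat (G.adj_sub h)) := by
  obtain ⟨hsub, hchain, hlt⟩ := hp
  refine ⟨?_, ?_, ?_⟩
  · rw [Walk.concat_eq_append, Walk.toSubgraph_append, Walk.toSubgraph_cons_nil_eq_subgraphOfAdj]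
    exact sup_le hsub (subgraphOfAdj_le_of_adj _ h)
  · rw [dirs_concat, hi]
    refine hchain.append (List.isChain_singleton i) fun x hx y hy => ?_
    rw [List.head?_cons, Option.mem_some_iff] at hy
    exact hy ▸ hlt x (List.mem_of_mem_getLast? hx)
  · simp only [dirs_concat, hi, List.mem_append, List.mem_singleton]
    rintro j (hj | rfl)
    exacts [(hlt j hj).trans (Nat.lt_succ_self i), Nat.lt_succ_self j]

lemma hasIncWalkBelow_zero {u : Fin n → Bool} (hu : u ∈ G.verts) (i : ℕ) :
    HasIncWalkBelow G i u 0 :=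
  ⟨u, Walk.nil, ⟨by simpa using hu, List.isChain_nil, by simp [dirs]⟩, rfl⟩

lemma HasIncWalkBelow.mono {i i' : ℕ} {u : Fin n → Bool} {l : ℕ} (h : HasIncWalkBelow G i u l)
    (hi : i ≤ i') : HasIncWalkBelow G i' u l :=
  let ⟨w, p, ⟨hsub, hchain, hlt⟩, hl⟩ := h
  ⟨w, p, ⟨hsub, hchain, fun j hj => (hlt j hj).trans_le hi⟩, hl⟩

lemma HasIncWalkBelow.of_le {i : ℕ} {u : Fin n → Bool} {l k : ℕ} (h : HasIncWalkBelow G i u l)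
    (hk : k ≤ l) : HasIncWalkBelow G i u k := by
  obtain ⟨w, p, ⟨hsub, hchain, hlt⟩, rfl⟩ := h
  have hsuffix : dirs (p.drop (p.length - k)) <:+ dirs p := dirs_drop p _ ▸ List.drop_suffix _ _
  refine ⟨_, p.drop (p.length - k), ⟨?_, hchain.suffix hsuffix, fun j hj => hlt j
    (hsuffix.subset hj)⟩, by rw [Walk.drop_length]; omega⟩
  calc (p.drop (p.length - k)).toSubgraph
      ≤ ((p.take (p.length - k)).append (p.drop (p.length - k))).toSubgraph := by
        rw [Walk.toSubgraph_append]; exact le_sup_right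
    _ = p.toSubgraph := by rw [p.append_take_drop_eq]
    _ ≤ G := hsub

lemma HasIncWalkBelow.succ {i : ℕ} {u v : Fin n → Bool} {l : ℕ} (h : HasIncWalkBelow G i u l)
    (hadj : G.Adj u v) (hi : dir u v = i) : HasIncWalkBelow G (i + 1) v (l + 1) :=
  let ⟨w, p, hp, hl⟩ := h
  ⟨w, _, hp.concat hadj hi, by rw [Walk.length_concat, hl]⟩

end IncreasingWalks

section Potential

open scoped Classical

variable {n : ℕ} (G : (Q n).Subgraph)

noncomputable def cappedIncLength (d i : ℕ) (u : Fin n → Bool) : ℕ :=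
  Nat.findGreatest (HasIncWalkBelow G i u) (d - 1)

noncomputable def adjPairs : Finset ((Fin n → Bool) × (Fin n → Bool)) := {p | G.Adj p.1 p.2}

noncomputable def dirPairs (i : ℕ) : Finset ((Fin n → Bool) × (Fin n → Bool)) :=
  {p ∈ adjPairs G | dir p.1 p.2 = i}

variable {G}

lemma cappedIncLength_le (d i : ℕ) (u : Fin n → Bool) : cappedIncLength G d i u ≤ d - 1 :=
  Nat.findGreatest_le _

lemma hasIncWalkBelow_cappedIncLength {u : Fin n → Bool} (hu : u ∈ G.verts) (d i : ℕ) :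
    HasIncWalkBelow G i u (cappedIncLength G d i u) :=
  Nat.findGreatest_spec (Nat.zero_le _) (hasIncWalkBelow_zero hu i)

lemma cappedIncLength_mono (d : ℕ) {i i' : ℕ} (hi : i ≤ i') (u : Fin n → Bool) :
    cappedIncLength G d i u ≤ cappedIncLength G d i' u :=
  Nat.findGreatest_mono_left (fun _ h => h.mono hi) _

lemma cappedIncLength_succ {d i : ℕ} {u v : Fin n → Bool} (hadj : G.Adj u v) (hi : dir u v = i) :
    cappedIncLength G d i u + 1 ≤
      cappedIncLength G d (i + 1) v + if HasIncWalkBelow G i u (d - 1) then 1 else 0 := by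
  have hu := hasIncWalkBelow_cappedIncLength hadj.fst_mem d i
  have hle := cappedIncLength_le (G := G) d i u
  split_ifs with hfull
  · have : d - 1 ≤ cappedIncLength G d (i + 1) v :=
      Nat.le_findGreatest le_rfl ((hfull.succ hadj hi).of_le (Nat.le_succ _))
    omega
  · have hlt : cappedIncLength G d i u < d - 1 := lt_of_le_of_ne hle fun h => hfull (h ▸ hu)
    exact Nat.le_findGreatest hlt (hu.succ hadj hi)

lemma mem_dirPairs {i : ℕ} {p : (Fin n → Bool) × (Fin n → Bool)} :
    p ∈ dirPairs G i ↔ G.Adj p.1 p.2 ∧ dir p.1 p.2 = i := by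
  simp [dirPairs, adjPairs]

lemma injOn_snd_dirPairs (i : ℕ) :
    Set.InjOn Prod.snd (dirPairs G i : Set ((Fin n → Bool) × (Fin n → Bool))) := by
  intro p hp q hq h2
  rw [mem_coe, mem_dirPairs] at hp hq
  have h1 : p.1 = q.1 := eq_of_adj_of_dir_eq (G.adj_sub hp.1.symm) (h2 ▸ G.adj_sub hq.1.symm)
    (by rw [dir_comm, hp.2, h2, dir_comm, hq.2])
  exact Prod.ext h1 h2

lemma sum_cappedIncLength_add_card_dirPairs_le (d i : ℕ) :
    ∑ u ∈ G.verts.toFinset, cappedIncLength G d i u + #(dirPairs G i) ≤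
      ∑ u ∈ G.verts.toFinset, cappedIncLength G d (i + 1) u +
        ∑ p ∈ dirPairs G i, if HasIncWalkBelow G (dir p.1 p.2) p.1 (d - 1) then 1 else 0 := by
  refine sum_add_card_le_of_matching (fun p hp => ?_) (injOn_snd_dirPairs i)
    (fun p hp => ?_) (fun u _ => cappedIncLength_mono d i.le_succ u) (fun p hp => ?_)
  all_goals rw [mem_dirPairs] at hp
  · exact mem_dirPairs.2 ⟨hp.1.symm, (dir_comm _ _).trans hp.2⟩
  · exact Set.mem_toFinset.2 hp.1.snd_mem
  · rw [hp.2]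
    exact cappedIncLength_succ hp.1 hp.2

lemma sum_card_dirPairs_le (d m : ℕ) :
    ∑ i ∈ range m, #(dirPairs G i) ≤
      ∑ u ∈ G.verts.toFinset, cappedIncLength G d m u +
        ∑ i ∈ range m, ∑ p ∈ dirPairs G i,
          if HasIncWalkBelow G (dir p.1 p.2) p.1 (d - 1) then 1 else 0 := by
  induction m with
  | zero => simp
  | succ m ih =>
    have := sum_cappedIncLength_add_card_dirPairs_le (G := G) d m
    rw [sum_range_succ, sum_range_succ]
    omega

lemma card_adjPairs : #(adjPairs G) = 2 * G.edgeSet.ncard := by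
  rw [← G.edgeSet_spanningCoe, Set.ncard_eq_toFinset_card', ← edgeFinset,
    two_mul_card_edgeFinset]
  rfl

variable (G) in
noncomputable def goodPairs (d : ℕ) : Finset ((Fin n → Bool) × (Fin n → Bool)) :=
  {p ∈ adjPairs G | HasIncWalkBelow G (dir p.1 p.2) p.1 (d - 1)}

lemma card_adjPairs_le (d : ℕ) :
    #(adjPairs G) ≤ #G.verts.toFinset * (d - 1) + #(goodPairs G d) := by
  have hdir : ∀ p ∈ adjPairs G, dir p.1 p.2 ∈ range n := fun p hp =>
    mem_range.2 (dir_lt_of_adj (G.adj_sub (by simpa [adjPairs] using hp)))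
  have hpairs : ∑ i ∈ range n, #(dirPairs G i) = #(adjPairs G) :=
    (card_eq_sum_card_fiberwise hdir).symm
  have hgood : ∑ i ∈ range n, ∑ p ∈ dirPairs G i,
      (if HasIncWalkBelow G (dir p.1 p.2) p.1 (d - 1) then 1 else 0) = #(goodPairs G d) := by
    simp only [dirPairs]
    rw [sum_fiberwise_of_maps_to hdir, sum_boole, Nat.cast_id, goodPairs]
  have hcap : ∑ u ∈ G.verts.toFinset, cappedIncLength G d n u ≤ #G.verts.toFinset * (d - 1) :=
    (sum_le_sum fun u _ => cappedIncLength_le d n u).trans_eq (by rw [sum_const, smul_eq_mul])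
  have := sum_card_dirPairs_le (G := G) d n
  omega

lemma exists_isIncGeodesic_of_mem_goodPairs {d : ℕ} (hd : 0 < d)
    {p : (Fin n → Bool) × (Fin n → Bool)} (hp : p ∈ goodPairs G d) :
    ∃ q : Σ u v : Fin n → Bool, (Q n).Walk u v,
      (q.2.2.toSubgraph ≤ G ∧ IsIncGeodesic q.2.2 ∧ q.2.2.length = d) ∧
        (q.2.2.penultimate, q.2.1) = p := by
  simp only [goodPairs, adjPairs, mem_filter, mem_univ, true_and] at hp
  obtain ⟨hadj, w, r, hr, hl⟩ := hp
  obtain ⟨hsub, hchain, -⟩ := hr.concat hadj rfl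
  refine ⟨⟨w, p.2, r.concat (G.adj_sub hadj)⟩, ⟨hsub, isIncGeodesic_of_chain _ hchain, ?_⟩, ?_⟩
  · rw [Walk.length_concat, hl]
    omega
  · simp

lemma finite_setOf_length_eq (d : ℕ) :
    {q : Σ u v : Fin n → Bool, (Q n).Walk u v | q.2.2.length = d}.Finite :=
  (Set.finite_range fun x : Σ u v : Fin n → Bool, {p : (Q n).Walk u v // p.length = d} =>
    (⟨x.1, x.2.1, x.2.2.1⟩ : Σ u v : Fin n → Bool, (Q n).Walk u v)).subset
    fun q hq => ⟨⟨q.1, q.2.1, q.2.2, hq⟩, rfl⟩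

lemma card_goodPairs_le {d : ℕ} (hd : 0 < d) :
    #(goodPairs G d) ≤
      {q : Σ u v : Fin n → Bool, (Q n).Walk u v |
        q.2.2.toSubgraph ≤ G ∧ IsIncGeodesic q.2.2 ∧ q.2.2.length = d}.ncard := by
  set T := {q : Σ u v : Fin n → Bool, (Q n).Walk u v |
    q.2.2.toSubgraph ≤ G ∧ IsIncGeodesic q.2.2 ∧ q.2.2.length = d}
  have hT : T.Finite := (finite_setOf_length_eq d).subset fun q hq => hq.2.2
  rw [← Set.ncard_coe_finset]
  calc (goodPairs G d : Set _).ncard ≤ ((fun q => (q.2.2.penultimate, q.2.1)) '' T).ncard :=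
        Set.ncard_le_ncard (fun p hp => exists_isIncGeodesic_of_mem_goodPairs hd hp) (hT.image _)
    _ ≤ T.ncard := Set.ncard_image_le hT

end Potential

/-- If `G` is a subgraph of `Q n` with average degree at least `d ∈ ℕ`, `d > 0`, then
`G` contains at least `|G|` increasing geodesics of length `d`.  (An increasing
geodesic has a canonical orientation, so oriented counting is the natural one.) -/
theorem stmt3 (n d : ℕ) (hd : 0 < d) (G : (Q n).Subgraph)
    (havg : (d : ℝ) * G.verts.ncard ≤ 2 * G.edgeSet.ncard) :
    G.verts.ncard ≤
      {q : Σ u : Fin n → Bool, Σ v : Fin n → Bool, (Q n).Walk u v |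
        q.2.2.toSubgraph ≤ G ∧ IsIncGeodesic q.2.2 ∧ q.2.2.length = d}.ncard := by
  obtain ⟨d, rfl⟩ : ∃ d', d = d' + 1 := ⟨d - 1, by omega⟩
  have havg' : (d + 1) * G.verts.ncard ≤ 2 * G.edgeSet.ncard := by exact_mod_cast havg
  have hcount := card_adjPairs_le (G := G) (d + 1)
  rw [card_adjPairs, ← Set.ncard_eq_toFinset_card', Nat.add_sub_cancel] at hcount
  have hgood := card_goodPairs_le (G := G) hd
  linarith
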